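/- Suppose |V(x)| ≤ K for all x ∈ (a,b), and suppose some interval J ⊆ (a,b) with length |J| ≤ 2/√(K + |E|) contains at least two of the interaction points x_n. Then P(B) = 0 for every measurable subset B of A(E) = {ω : E ∈ σ_p(H_ω)}. -/

import Mathlib

open Filter Topology Set MeasureTheory

/-- `u, u'` solve `-u'' + V u = E u` on `(lo,hi)` away from the interaction points
`x n`, with δ-interaction jump conditions of strength `cpl n` at each `x n ∈ (lo,hi)`.
At an interaction point the value `u' (x n)` is the right limit `u'(x n +)`. -/
structure DeltaODE (V : ℝ → ℝ) (lo hi : ℝ) {ι : Type*} (x : ι → ℝ) (cpl : ι → ℝ)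
    (E : ℝ) (u u' : ℝ → ℝ) : Prop where
  deriv : ∀ t ∈ Set.Ioo lo hi, (∀ n, t ≠ x n) → HasDerivAt u (u' t) t
  ode : ∀ t ∈ Set.Ioo lo hi, (∀ n, t ≠ x n) → HasDerivAt u' (V t * u t - E * u t) t
  contR : ∀ n, x n ∈ Set.Ioo lo hi →
    Filter.Tendsto u (nhdsWithin (x n) (Set.Ioi (x n))) (nhds (u (x n)))
  contL : ∀ n, x n ∈ Set.Ioo lo hi →
    Filter.Tendsto u (nhdsWithin (x n) (Set.Iio (x n))) (nhds (u (x n)))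
  derivR : ∀ n, x n ∈ Set.Ioo lo hi →
    Filter.Tendsto u' (nhdsWithin (x n) (Set.Ioi (x n))) (nhds (u' (x n)))
  jump : ∀ n, x n ∈ Set.Ioo lo hi → ∃ dm,
    Filter.Tendsto u' (nhdsWithin (x n) (Set.Iio (x n))) (nhds dm) ∧
    u' (x n) - dm = cpl n * u (x n)

/-- Witness that `E` is an eigenvalue of the self-adjoint operator `H_ω` on `L²(a,b)`
with δ-interactions of strengths `ω n` at the points `x n` and eigenfunction `u`:
`u` is nontrivial, square integrable, solves the equation with the interaction
conditions, and satisfies the separated boundary condition at each regular endpoint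
(the angle is `some θ`; `none` means no condition, for a limit point endpoint). -/
structure EigWit (V : ℝ → ℝ) (a b : ℝ) {ι : Type*} (x : ι → ℝ) (ω : ι → ℝ)
    (bca bcb : Option ℝ) (E : ℝ) (u u' : ℝ → ℝ) : Prop where
  nontriv : ∃ t ∈ Set.Ioo a b, u t ≠ 0
  sq : MeasureTheory.MemLp u 2 (MeasureTheory.volume.restrict (Set.Ioo a b))
  sol : DeltaODE V a b x ω E u u'
  bc_a : ∀ θ ∈ bca, ContinuousWithinAt u (Set.Ici a) a ∧
    ContinuousWithinAt u' (Set.Ici a) a ∧ u a * Real.cos θ + u' a * Real.sin θ = 0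
  bc_b : ∀ γ ∈ bcb, ContinuousWithinAt u (Set.Iic b) b ∧
    ContinuousWithinAt u' (Set.Iic b) b ∧ u b * Real.cos γ + u' b * Real.sin γ = 0

/-!
If `A(E)` had positive probability, disintegrating `P` along the coordinates of two adjacent
interaction points `x n < x m` of `J` would give, by atomlessness, couplings that differ at a
single coordinate `k` and both have `E` as an eigenvalue. The Wronskian of the two
eigenfunctions vanishes on either side of `x k` (by the boundary condition, or because in the
limit point case two independent square integrable solutions would make every solution square
integrable), while its jump at `x k` is `(ω₂ k - ω₁ k) u(x k) v(x k)`; so one of the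
eigenfunctions vanishes at `x k`. Doing this at `x m` and then at `x n` produces an
eigenfunction vanishing at both points. Between them it solves `-u'' + (V - E) u = 0` without
interactions, and since `(K + |E|) (x m - x n)² ≤ 4`, Lyapunov's inequality forces it to vanish
there, hence everywhere by uniqueness for the interaction problem.
-/

lemma abs_mul_sub_mul_le {V E M y : ℝ} (h : |V - E| ≤ M) : |V * y - E * y| ≤ M * |y| := by
  rw [← sub_mul, abs_mul]
  exact mul_le_mul_of_nonneg_right h (abs_nonneg y)

lemma tendsto_nhdsLT_of_eqOn {f : ℝ → ℝ} {l t c : ℝ} (hlt : l < t)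
    (h : ∀ s ∈ Ioo l t, f s = c) : Tendsto f (𝓝[<] t) (𝓝 c) :=
  tendsto_const_nhds.congr' (eventuallyEq_of_mem (Ioo_mem_nhdsLT hlt) fun s hs => (h s hs).symm)

lemma tendsto_nhdsGT_of_eqOn {f : ℝ → ℝ} {t r c : ℝ} (htr : t < r)
    (h : ∀ s ∈ Ioo t r, f s = c) : Tendsto f (𝓝[>] t) (𝓝 c) :=
  tendsto_const_nhds.congr' (eventuallyEq_of_mem (Ioo_mem_nhdsGT htr) fun s hs => (h s hs).symm)

section Gronwall

variable {g g' q : ℝ → ℝ} {r s M : ℝ}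

theorem eqOn_zero_of_tendsto_nhdsGT
    (hd : ∀ t ∈ Ioo r s, HasDerivAt g (g' t) t) (hd2 : ∀ t ∈ Ioo r s, HasDerivAt g' (q t) t)
    (hq : ∀ t ∈ Ioo r s, |q t| ≤ M * |g t|)
    (h0 : Tendsto g (𝓝[>] r) (𝓝 0)) (h0' : Tendsto g' (𝓝[>] r) (𝓝 0)) :
    ∀ t ∈ Ioo r s, g t = 0 ∧ g' t = 0 := by
  intro t ht
  -- the data at `r` are only limits: apply Grönwall on `[p, t]` and let `p → r`
  set L := max 1 M
  have hL : 0 ≤ L := zero_le_one.trans (le_max_left _ _)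
  let F : ℝ → ℝ × ℝ := fun τ => (g τ, g' τ)
  have hF : ∀ τ, ‖F τ‖ = max |g τ| |g' τ| := fun τ => by simp [F, Prod.norm_def]
  have hbound : ∀ p ∈ Ioo r t, ‖F t‖ ≤ ‖F p‖ * Real.exp (L * (t - r)) := by
    intro p hp
    have hsub : Icc p t ⊆ Ioo r s := Icc_subset_Ioo hp.1 ht.2
    have hgr := norm_le_gronwallBound_of_norm_deriv_right_le (f' := fun τ => (g' τ, q τ))
      (K := L) (ε := 0)
      (fun τ hτ => ((hd τ (hsub hτ)).continuousAt.prodMk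
        (hd2 τ (hsub hτ)).continuousAt).continuousWithinAt)
      (fun τ hτ => ((hd τ (hsub (Ico_subset_Icc_self hτ))).prodMk
        (hd2 τ (hsub (Ico_subset_Icc_self hτ)))).hasDerivWithinAt)
      le_rfl (fun τ hτ => ?_) t (right_mem_Icc.2 hp.2.le)
    · rw [gronwallBound_ε0] at hgr
      refine hgr.trans (mul_le_mul_of_nonneg_left ?_ (norm_nonneg _))
      exact Real.exp_le_exp.2 (mul_le_mul_of_nonneg_left (by linarith [hp.1]) hL)
    · have hτ' := hsub (Ico_subset_Icc_self hτ)
      rw [hF, add_zero, Prod.norm_def, Real.norm_eq_abs, Real.norm_eq_abs]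
      refine max_le ?_ ((hq τ hτ').trans ?_)
      · exact (le_max_right _ _).trans (le_mul_of_one_le_left (by positivity) (le_max_left _ _))
      · exact mul_le_mul (le_max_right _ _) (le_max_left _ _) (abs_nonneg _) hL
  have hlim : Tendsto (fun p => ‖F p‖ * Real.exp (L * (t - r))) (𝓝[>] r) (𝓝 0) := by
    simpa [hF] using (h0.prodMk_nhds h0').norm.mul_const (Real.exp (L * (t - r)))
  have hFt : ‖F t‖ ≤ 0 :=
    ge_of_tendsto hlim (eventually_of_mem (Ioo_mem_nhdsGT ht.1) hbound)
  have := norm_le_zero_iff.1 hFt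
  exact ⟨congrArg Prod.fst this, congrArg Prod.snd this⟩

theorem eqOn_zero_of_tendsto_nhdsLT
    (hd : ∀ t ∈ Ioo r s, HasDerivAt g (g' t) t) (hd2 : ∀ t ∈ Ioo r s, HasDerivAt g' (q t) t)
    (hq : ∀ t ∈ Ioo r s, |q t| ≤ M * |g t|)
    (h0 : Tendsto g (𝓝[<] s) (𝓝 0)) (h0' : Tendsto g' (𝓝[<] s) (𝓝 0)) :
    ∀ t ∈ Ioo r s, g t = 0 ∧ g' t = 0 := by
  have hneg : ∀ τ ∈ Ioo (-s) (-r), -τ ∈ Ioo r s := fun τ hτ =>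
    ⟨by linarith [hτ.2], by linarith [hτ.1]⟩
  have hrefl : Tendsto (fun τ : ℝ => -τ) (𝓝[>] (-s)) (𝓝[<] s) := tendsto_neg_nhdsGT_neg
  have key := eqOn_zero_of_tendsto_nhdsGT (g := fun τ => g (-τ)) (g' := fun τ => -g' (-τ))
    (q := fun τ => q (-τ)) (r := -s) (s := -r) (M := M)
    (fun τ hτ => ((hd (-τ) (hneg τ hτ)).comp τ (hasDerivAt_neg τ)).congr_deriv (by ring))
    (fun τ hτ => (((hd2 (-τ) (hneg τ hτ)).comp τ (hasDerivAt_neg τ)).neg).congr_deriv (by ring))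
    (fun τ hτ => hq (-τ) (hneg τ hτ)) (h0.comp hrefl) (by simpa using (h0'.comp hrefl).neg)
  intro t ht
  have := key (-t) ⟨by linarith [ht.2], by linarith [ht.1]⟩
  simpa using this

end Gronwall

lemma exists_Ioo_jumpFree {ι : Type*} {x : ι → ℝ} {lo hi t : ℝ}
    (hfin : ∀ K : Set ℝ, IsCompact K → K ⊆ Ioo lo hi → {n | x n ∈ K}.Finite)
    (ht : t ∈ Ioo lo hi) :
    ∃ l < t, ∃ r > t, (∀ s ∈ Ioo l t, s ∈ Ioo lo hi ∧ ∀ n, s ≠ x n) ∧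
      ∀ s ∈ Ioo t r, s ∈ Ioo lo hi ∧ ∀ n, s ≠ x n := by
  set K := Icc ((lo + t) / 2) ((t + hi) / 2)
  have hKsub : K ⊆ Ioo lo hi := Icc_subset_Ioo (by linarith [ht.1]) (by linarith [ht.2])
  have hK : K ∈ 𝓝 t := Icc_mem_nhds (by linarith [ht.1]) (by linarith [ht.2])
  have hF : (x '' {n | x n ∈ K} \ {t}).Finite := ((hfin K isCompact_Icc hKsub).image x).sdiff
  have hev : ∀ᶠ s in 𝓝[≠] t, s ∈ Ioo lo hi ∧ ∀ n, s ≠ x n := by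
    filter_upwards [mem_nhdsWithin_of_mem_nhds hK,
      mem_nhdsWithin_of_mem_nhds (hF.isClosed.compl_mem_nhds (by simp)),
      self_mem_nhdsWithin] with s hsK hsF hst
    exact ⟨hKsub hsK, fun n hn => hsF ⟨⟨n, show x n ∈ K from hn ▸ hsK, hn.symm⟩, hst⟩⟩
  obtain ⟨l, hl, hL⟩ := mem_nhdsLT_iff_exists_Ioo_subset.1 (hev.filter_mono (nhdsLT_le_nhdsNE t))
  obtain ⟨r, hr, hR⟩ := mem_nhdsGT_iff_exists_Ioo_subset.1 (hev.filter_mono (nhdsGT_le_nhdsNE t))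
  exact ⟨l, hl, r, hr, hL, hR⟩

open Classical in
noncomputable def jumpAt {ι : Type*} (x cpl : ι → ℝ) (t : ℝ) : ℝ :=
  if h : ∃ n, x n = t then cpl h.choose else 0

def wronskian (u u' v v' : ℝ → ℝ) (t : ℝ) : ℝ := u t * v' t - u' t * v t

namespace DeltaODE

variable {V : ℝ → ℝ} {lo hi M : ℝ} {ι : Type*} {x : ι → ℝ} {cpl cpl' : ι → ℝ} {E : ℝ}
  {u u' v v' f f' : ℝ → ℝ} {t : ℝ}

lemma mono (h : DeltaODE V lo hi x cpl E u u') {lo' hi' : ℝ}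
    (hsub : Ioo lo' hi' ⊆ Ioo lo hi) : DeltaODE V lo' hi' x cpl E u u' where
  deriv t ht := h.deriv t (hsub ht)
  ode t ht := h.ode t (hsub ht)
  contR n hn := h.contR n (hsub hn)
  contL n hn := h.contL n (hsub hn)
  derivR n hn := h.derivR n (hsub hn)
  jump n hn := h.jump n (hsub hn)

lemma congr_coupling (h : DeltaODE V lo hi x cpl E u u')
    (heq : ∀ n, x n ∈ Ioo lo hi → cpl' n * u (x n) = cpl n * u (x n)) :
    DeltaODE V lo hi x cpl' E u u' :=
  { h with jump := fun n hn => by simpa only [heq n hn] using h.jump n hn }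

lemma linComb (hu : DeltaODE V lo hi x cpl E u u') (hv : DeltaODE V lo hi x cpl E v v')
    (α β : ℝ) :
    DeltaODE V lo hi x cpl E (fun t => α * u t + β * v t) (fun t => α * u' t + β * v' t) where
  deriv t ht htx := ((hu.deriv t ht htx).const_mul α).add ((hv.deriv t ht htx).const_mul β)
  ode t ht htx :=
    (((hu.ode t ht htx).const_mul α).add ((hv.ode t ht htx).const_mul β)).congr_deriv (by ring)
  contR n hn := ((hu.contR n hn).const_mul α).add ((hv.contR n hn).const_mul β)
  contL n hn := ((hu.contL n hn).const_mul α).add ((hv.contL n hn).const_mul β)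
  derivR n hn := ((hu.derivR n hn).const_mul α).add ((hv.derivR n hn).const_mul β)
  jump n hn := by
    obtain ⟨dmu, hdmu, hju⟩ := hu.jump n hn
    obtain ⟨dmv, hdmv, hjv⟩ := hv.jump n hn
    exact ⟨α * dmu + β * dmv, (hdmu.const_mul α).add (hdmv.const_mul β),
      by linear_combination α * hju + β * hjv⟩

lemma continuousAt (h : DeltaODE V lo hi x cpl E u u') (ht : t ∈ Ioo lo hi) :
    ContinuousAt u t := by
  by_cases hex : ∃ n, x n = t
  · obtain ⟨n, rfl⟩ := hex
    exact continuousAt_iff_continuous_left'_right'.2 ⟨h.contL n ht, h.contR n ht⟩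
  · exact (h.deriv t ht fun n hn => hex ⟨n, hn.symm⟩).continuousAt

lemma tendsto_deriv_nhdsGT (h : DeltaODE V lo hi x cpl E u u') (ht : t ∈ Ioo lo hi) :
    Tendsto u' (𝓝[>] t) (𝓝 (u' t)) := by
  by_cases hex : ∃ n, x n = t
  · obtain ⟨n, rfl⟩ := hex
    exact h.derivR n ht
  · exact (h.ode t ht fun n hn => hex ⟨n, hn.symm⟩).continuousAt.continuousWithinAt

lemma tendsto_deriv_nhdsLT (h : DeltaODE V lo hi x cpl E u u') (ht : t ∈ Ioo lo hi) :
    Tendsto u' (𝓝[<] t) (𝓝 (u' t - jumpAt x cpl t * u t)) := by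
  unfold jumpAt
  split_ifs with hex
  · obtain ⟨dm, hdm, hjump⟩ := h.jump hex.choose (hex.choose_spec.symm ▸ ht)
    rw [hex.choose_spec] at hdm hjump
    rwa [← hjump, sub_sub_cancel]
  · simpa using (h.ode t ht fun n hn => hex ⟨n, hn.symm⟩).continuousAt.continuousWithinAt.tendsto

lemma deriv_eq_zero_of_eventually (h : DeltaODE V lo hi x cpl E u u') (ht : t ∈ Ioo lo hi)
    (htx : ∀ n, t ≠ x n) (h0 : ∀ᶠ s in 𝓝 t, u s = 0) : u' t = 0 :=
  (h.deriv t ht htx).unique ((hasDerivAt_const t (0 : ℝ)).congr_of_eventuallyEq h0)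

lemma eqOn_zero_of_tendsto_nhdsGT (h : DeltaODE V lo hi x cpl E u u')
    (hM : ∀ t ∈ Ioo lo hi, |V t - E| ≤ M) {r s : ℝ}
    (hrs : ∀ t ∈ Ioo r s, t ∈ Ioo lo hi ∧ ∀ n, t ≠ x n)
    (h0 : Tendsto u (𝓝[>] r) (𝓝 0)) (h0' : Tendsto u' (𝓝[>] r) (𝓝 0)) :
    ∀ t ∈ Ioo r s, u t = 0 ∧ u' t = 0 :=
  _root_.eqOn_zero_of_tendsto_nhdsGT (fun t ht => h.deriv t (hrs t ht).1 (hrs t ht).2)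
    (fun t ht => h.ode t (hrs t ht).1 (hrs t ht).2)
    (fun t ht => abs_mul_sub_mul_le (hM t (hrs t ht).1)) h0 h0'

lemma eqOn_zero_of_tendsto_nhdsLT (h : DeltaODE V lo hi x cpl E u u')
    (hM : ∀ t ∈ Ioo lo hi, |V t - E| ≤ M) {r s : ℝ}
    (hrs : ∀ t ∈ Ioo r s, t ∈ Ioo lo hi ∧ ∀ n, t ≠ x n)
    (h0 : Tendsto u (𝓝[<] s) (𝓝 0)) (h0' : Tendsto u' (𝓝[<] s) (𝓝 0)) :
    ∀ t ∈ Ioo r s, u t = 0 ∧ u' t = 0 :=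
  _root_.eqOn_zero_of_tendsto_nhdsLT (fun t ht => h.deriv t (hrs t ht).1 (hrs t ht).2)
    (fun t ht => h.ode t (hrs t ht).1 (hrs t ht).2)
    (fun t ht => abs_mul_sub_mul_le (hM t (hrs t ht).1)) h0 h0'

lemma eq_zero_of_eqOn_Ioo_left (h : DeltaODE V lo hi x cpl E u u') (ht : t ∈ Ioo lo hi)
    {l : ℝ} (hlt : l < t) (hvan : ∀ s ∈ Ioo l t, u s = 0 ∧ u' s = 0) : u t = 0 ∧ u' t = 0 := by
  have h0 : u t = 0 :=
    tendsto_nhds_unique ((h.continuousAt ht).tendsto.mono_left nhdsWithin_le_nhds)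
    (tendsto_nhdsLT_of_eqOn hlt fun s hs => (hvan s hs).1)
  have h0' := tendsto_nhds_unique (h.tendsto_deriv_nhdsLT ht)
    (tendsto_nhdsLT_of_eqOn hlt fun s hs => (hvan s hs).2)
  exact ⟨h0, by simpa [h0] using h0'⟩

lemma eq_zero_of_eqOn_Ioo_right (h : DeltaODE V lo hi x cpl E u u') (ht : t ∈ Ioo lo hi)
    {r : ℝ} (htr : t < r) (hvan : ∀ s ∈ Ioo t r, u s = 0 ∧ u' s = 0) : u t = 0 ∧ u' t = 0 :=
  ⟨tendsto_nhds_unique ((h.continuousAt ht).tendsto.mono_left nhdsWithin_le_nhds)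
    (tendsto_nhdsGT_of_eqOn htr fun s hs => (hvan s hs).1),
   tendsto_nhds_unique (h.tendsto_deriv_nhdsGT ht)
    (tendsto_nhdsGT_of_eqOn htr fun s hs => (hvan s hs).2)⟩

lemma eventually_eq_zero (h : DeltaODE V lo hi x cpl E u u')
    (hM : ∀ t ∈ Ioo lo hi, |V t - E| ≤ M)
    (hfin : ∀ K : Set ℝ, IsCompact K → K ⊆ Ioo lo hi → {n | x n ∈ K}.Finite)
    (ht : t ∈ Ioo lo hi) (h0 : u t = 0) (h0' : u' t = 0) :
    ∀ᶠ s in 𝓝 t, u s = 0 ∧ u' s = 0 := by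
  obtain ⟨l, hl, r, hr, hL, hR⟩ := exists_Ioo_jumpFree hfin ht
  have hu : Tendsto u (𝓝 t) (𝓝 0) := h0 ▸ (h.continuousAt ht).tendsto
  have hleft := h.eqOn_zero_of_tendsto_nhdsLT hM hL (hu.mono_left nhdsWithin_le_nhds)
    (by simpa [h0, h0'] using h.tendsto_deriv_nhdsLT ht)
  have hright := h.eqOn_zero_of_tendsto_nhdsGT hM hR (hu.mono_left nhdsWithin_le_nhds)
    (h0' ▸ h.tendsto_deriv_nhdsGT ht)
  filter_upwards [Ioo_mem_nhds hl hr] with s hs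
  rcases lt_trichotomy s t with hst | rfl | hst
  · exact hleft s ⟨hs.1, hst⟩
  · exact ⟨h0, h0'⟩
  · exact hright s ⟨hst, hs.2⟩

theorem eq_zero_of_eq_zero_of_deriv_eq_zero (h : DeltaODE V lo hi x cpl E u u')
    (hM : ∀ t ∈ Ioo lo hi, |V t - E| ≤ M)
    (hfin : ∀ K : Set ℝ, IsCompact K → K ⊆ Ioo lo hi → {n | x n ∈ K}.Finite)
    {p : ℝ} (hp : p ∈ Ioo lo hi) (h0 : u p = 0) (h0' : u' p = 0) :
    ∀ t ∈ Ioo lo hi, u t = 0 := by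
  suffices Ioo lo hi ⊆ {t | ∀ᶠ s in 𝓝 t, u s = 0 ∧ u' s = 0} from
    fun t ht => (this ht).self_of_nhds.1
  refine isPreconnected_Ioo.subset_of_closure_inter_subset isOpen_setOfPred_eventually_nhds
    ⟨p, hp, h.eventually_eq_zero hM hfin hp h0 h0'⟩ ?_
  rintro t ⟨htZ, ht⟩
  obtain ⟨l, hl, r, hr, hL, hR⟩ := exists_Ioo_jumpFree hfin ht
  obtain ⟨z, hz, hzZ⟩ := mem_closure_iff_nhds.1 htZ _ (Ioo_mem_nhds hl hr)
  have hlim : ∀ F ≤ 𝓝 z, Tendsto u F (𝓝 0) ∧ Tendsto u' F (𝓝 0) := fun F hF =>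
    ⟨tendsto_const_nhds.congr' ((hzZ.filter_mono hF).mono fun s hs => hs.1.symm),
     tendsto_const_nhds.congr' ((hzZ.filter_mono hF).mono fun s hs => hs.2.symm)⟩
  rcases lt_trichotomy z t with hzt | rfl | hzt
  · have hvan := h.eqOn_zero_of_tendsto_nhdsGT hM (fun s hs => hL s ⟨hz.1.trans hs.1, hs.2⟩)
      (hlim _ nhdsWithin_le_nhds).1 (hlim _ nhdsWithin_le_nhds).2
    obtain ⟨h0, h0'⟩ := h.eq_zero_of_eqOn_Ioo_left ht hzt hvan
    exact h.eventually_eq_zero hM hfin ht h0 h0'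
  · exact hzZ
  · have hvan := h.eqOn_zero_of_tendsto_nhdsLT hM (fun s hs => hR s ⟨hs.1, hs.2.trans hz.2⟩)
      (hlim _ nhdsWithin_le_nhds).1 (hlim _ nhdsWithin_le_nhds).2
    obtain ⟨h0, h0'⟩ := h.eq_zero_of_eqOn_Ioo_right ht hzt hvan
    exact h.eventually_eq_zero hM hfin ht h0 h0'

lemma continuousAt_wronskian (hu : DeltaODE V lo hi x cpl E u u')
    (hv : DeltaODE V lo hi x cpl E v v') (ht : t ∈ Ioo lo hi) :
    ContinuousAt (wronskian u u' v v') t := by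
  have hu0 := (hu.continuousAt ht).tendsto.mono_left (nhdsWithin_le_nhds (s := Iio t))
  have hv0 := (hv.continuousAt ht).tendsto.mono_left (nhdsWithin_le_nhds (s := Iio t))
  refine continuousAt_iff_continuous_left'_right'.2 ⟨?_, ?_⟩
  · have := (hu0.mul (hv.tendsto_deriv_nhdsLT ht)).sub ((hu.tendsto_deriv_nhdsLT ht).mul hv0)
    show Tendsto (fun s => u s * v' s - u' s * v s) _ (𝓝 (u t * v' t - u' t * v t))
    convert this using 2
    ring
  · exact ((hu.continuousAt ht).continuousWithinAt.mul (hv.tendsto_deriv_nhdsGT ht)).sub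
      ((hu.tendsto_deriv_nhdsGT ht).mul (hv.continuousAt ht).continuousWithinAt)

lemma hasDerivAt_wronskian (hu : DeltaODE V lo hi x cpl E u u')
    (hv : DeltaODE V lo hi x cpl E v v') (ht : t ∈ Ioo lo hi) (htx : ∀ n, t ≠ x n) :
    HasDerivAt (wronskian u u' v v') 0 t :=
  (((hu.deriv t ht htx).mul (hv.ode t ht htx)).sub
    ((hu.ode t ht htx).mul (hv.deriv t ht htx))).congr_deriv (by ring)

theorem wronskian_eq [Countable ι] (hu : DeltaODE V lo hi x cpl E u u')
    (hv : DeltaODE V lo hi x cpl E v v') {s : ℝ} (hs : s ∈ Ioo lo hi) (ht : t ∈ Ioo lo hi) :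
    wronskian u u' v v' s = wronskian u u' v v' t := by
  have hsub : uIcc s t ⊆ Ioo lo hi := ordConnected_Ioo.uIcc_subset hs ht
  have := integral_eq_of_hasDerivAt_off_countable (wronskian u u' v v') 0 (countable_range x)
    (fun y hy => (hu.continuousAt_wronskian hv (hsub hy)).continuousWithinAt)
    (fun y hy => hu.hasDerivAt_wronskian hv (hsub (Ioo_subset_Icc_self hy.1))
      fun n hn => hy.2 ⟨n, hn.symm⟩)
    intervalIntegrable_const
  simp only [Pi.zero_apply, intervalIntegral.integral_zero] at this
  linarith

theorem eqOn_linComb_of_wronskian_ne_zero (hu : DeltaODE V lo hi x cpl E u u')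
    (hv : DeltaODE V lo hi x cpl E v v') (hf : DeltaODE V lo hi x cpl E f f')
    (hM : ∀ t ∈ Ioo lo hi, |V t - E| ≤ M)
    (hfin : ∀ K : Set ℝ, IsCompact K → K ⊆ Ioo lo hi → {n | x n ∈ K}.Finite)
    {p : ℝ} (hp : p ∈ Ioo lo hi) (hW : wronskian u u' v v' p ≠ 0) :
    ∃ α β : ℝ, ∀ t ∈ Ioo lo hi, f t = α * u t + β * v t := by
  -- Cramer's rule for the initial data at `p`
  set α := wronskian f f' v v' p / wronskian u u' v v' p
  set β := wronskian u u' f f' p / wronskian u u' v v' p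
  have hα : α * u p + β * v p = f p := by
    rw [div_mul_eq_mul_div, div_mul_eq_mul_div, ← add_div, div_eq_iff hW]
    unfold wronskian
    ring
  have hβ : α * u' p + β * v' p = f' p := by
    rw [div_mul_eq_mul_div, div_mul_eq_mul_div, ← add_div, div_eq_iff hW]
    unfold wronskian
    ring
  have hg := hf.linComb (hu.linComb hv α β) 1 (-1)
  refine ⟨α, β, fun t ht => ?_⟩
  have := hg.eq_zero_of_eq_zero_of_deriv_eq_zero hM hfin hp (by simp [hα]) (by simp [hβ]) t ht
  linarith

theorem memLp_of_wronskian_ne_zero (hu : DeltaODE V lo hi x cpl E u u')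
    (hv : DeltaODE V lo hi x cpl E v v') (hf : DeltaODE V lo hi x cpl E f f')
    (hM : ∀ t ∈ Ioo lo hi, |V t - E| ≤ M)
    (hfin : ∀ K : Set ℝ, IsCompact K → K ⊆ Ioo lo hi → {n | x n ∈ K}.Finite)
    {p : ℝ} (hp : p ∈ Ioo lo hi) (hW : wronskian u u' v v' p ≠ 0)
    (hu2 : MemLp u 2 (volume.restrict (Ioo lo hi)))
    (hv2 : MemLp v 2 (volume.restrict (Ioo lo hi))) :
    MemLp f 2 (volume.restrict (Ioo lo hi)) := by
  obtain ⟨α, β, hαβ⟩ := hu.eqOn_linComb_of_wronskian_ne_zero hv hf hM hfin hp hW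
  refine ((hu2.const_mul α).add (hv2.const_mul β)).ae_eq ?_
  filter_upwards [ae_restrict_mem measurableSet_Ioo] with t ht using (hαβ t ht).symm

theorem wronskian_eq_zero_of_not_memLp (hu : DeltaODE V lo hi x cpl E u u')
    (hv : DeltaODE V lo hi x cpl E v v') (hf : DeltaODE V lo hi x cpl E f f')
    (hM : ∀ t ∈ Ioo lo hi, |V t - E| ≤ M)
    (hfin : ∀ K : Set ℝ, IsCompact K → K ⊆ Ioo lo hi → {n | x n ∈ K}.Finite)
    (hu2 : MemLp u 2 (volume.restrict (Ioo lo hi)))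
    (hv2 : MemLp v 2 (volume.restrict (Ioo lo hi)))
    (hf2 : ¬ MemLp f 2 (volume.restrict (Ioo lo hi))) :
    ∀ t ∈ Ioo lo hi, wronskian u u' v v' t = 0 := fun _ ht =>
  by_contra fun hW => hf2 (hu.memLp_of_wronskian_ne_zero hv hf hM hfin ht hW hu2 hv2)

theorem wronskian_eq_zero_of_tendsto [Countable ι] (hu : DeltaODE V lo hi x cpl E u u')
    (hv : DeltaODE V lo hi x cpl E v v') {l : Filter ℝ} [l.NeBot]
    (hl : ∀ᶠ s in l, s ∈ Ioo lo hi) (hW : Tendsto (wronskian u u' v v') l (𝓝 0)) :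
    ∀ t ∈ Ioo lo hi, wronskian u u' v v' t = 0 := fun _ ht =>
  tendsto_nhds_unique (tendsto_const_nhds.congr' (hl.mono fun _ hs => hu.wronskian_eq hv ht hs)) hW

end DeltaODE

lemma det_eq_zero_of_boundary_condition {p p' q q' θ : ℝ}
    (hp : p * Real.cos θ + p' * Real.sin θ = 0) (hq : q * Real.cos θ + q' * Real.sin θ = 0) :
    p * q' - p' * q = 0 := by
  linear_combination (Real.cos θ * q' - Real.sin θ * q) * hp
    + (Real.sin θ * p - Real.cos θ * p') * hq - (p * q' - p' * q) * Real.cos_sq_add_sin_sq θ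

/-- For `Z = ∅` this is the set `A(E)`. -/
def eigenSetVanishingOn (V : ℝ → ℝ) (a b : ℝ) {ι : Type*} (x : ι → ℝ) (bca bcb : Option ℝ)
    (E : ℝ) (Z : Set ℝ) : Set (ι → ℝ) :=
  {ω | ∃ u u' : ℝ → ℝ, EigWit V a b x ω bca bcb E u u' ∧ ∀ z ∈ Z, u z = 0}

namespace EigWit

variable {ι : Type*} {V : ℝ → ℝ} {a b c M E : ℝ} {x : ι → ℝ} {bca bcb : Option ℝ}
  {ω₁ ω₂ : ι → ℝ} {u u' v v' : ℝ → ℝ}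

lemma congr_coupling (h : EigWit V a b x ω₁ bca bcb E u u') {k : ι} (h0 : u (x k) = 0)
    (hω : ∀ j, j ≠ k → ω₂ j = ω₁ j) : EigWit V a b x ω₂ bca bcb E u u' :=
  { h with
    sol := h.sol.congr_coupling fun n _ => by
      by_cases hn : n = k
      · simp [hn, h0]
      · rw [hω n hn] }

lemma wronskian_eq_zero_left [Countable ι] (hu : EigWit V a b x ω₁ bca bcb E u u')
    (hv : EigWit V a b x ω₂ bca bcb E v v') (hM : ∀ t ∈ Ioo a b, |V t - E| ≤ M)
    (hdisc : ∀ K : Set ℝ, IsCompact K → K ⊆ Ioo a b → {n | x n ∈ K}.Finite)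
    (hlpa : bca = none → ∀ ω : ι → ℝ, ∃ f f' : ℝ → ℝ,
      DeltaODE V a b x ω E f f' ∧ ∀ c ∈ Ioo a b, ¬ MemLp f 2 (volume.restrict (Ioo a c)))
    (hc : c ∈ Ioo a b) (hω : ∀ n, x n ∈ Ioo a c → ω₂ n = ω₁ n) :
    ∀ t ∈ Ioo a c, wronskian u u' v v' t = 0 := by
  have hsub : Ioo a c ⊆ Ioo a b := Ioo_subset_Ioo_right hc.2.le
  have hu' := hu.sol.mono hsub
  have hv' := (hv.sol.mono hsub).congr_coupling fun n hn => by rw [hω n hn]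
  cases hbca : bca with
  | some θ =>
    obtain ⟨hcu, hcu', hbu⟩ := hu.bc_a θ hbca
    obtain ⟨hcv, hcv', hbv⟩ := hv.bc_a θ hbca
    refine hu'.wronskian_eq_zero_of_tendsto hv' (Ioo_mem_nhdsGT hc.1) ?_
    rw [← det_eq_zero_of_boundary_condition hbu hbv]
    exact ((hcu.mono Ioi_subset_Ici_self).mul (hcv'.mono Ioi_subset_Ici_self)).sub
      ((hcu'.mono Ioi_subset_Ici_self).mul (hcv.mono Ioi_subset_Ici_self))
  | none =>
    obtain ⟨f, f', hf, hf2⟩ := hlpa hbca ω₁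
    have hμ : volume.restrict (Ioo a c) ≤ volume.restrict (Ioo a b) :=
      Measure.restrict_mono hsub le_rfl
    exact hu'.wronskian_eq_zero_of_not_memLp hv' (hf.mono hsub) (fun t ht => hM t (hsub ht))
      (fun K hK hKs => hdisc K hK (hKs.trans hsub)) (hu.sq.mono_measure hμ)
      (hv.sq.mono_measure hμ) (hf2 c hc)

lemma wronskian_eq_zero_right [Countable ι] (hu : EigWit V a b x ω₁ bca bcb E u u')
    (hv : EigWit V a b x ω₂ bca bcb E v v') (hM : ∀ t ∈ Ioo a b, |V t - E| ≤ M)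
    (hdisc : ∀ K : Set ℝ, IsCompact K → K ⊆ Ioo a b → {n | x n ∈ K}.Finite)
    (hlpb : bcb = none → ∀ ω : ι → ℝ, ∃ f f' : ℝ → ℝ,
      DeltaODE V a b x ω E f f' ∧ ∀ c ∈ Ioo a b, ¬ MemLp f 2 (volume.restrict (Ioo c b)))
    (hc : c ∈ Ioo a b) (hω : ∀ n, x n ∈ Ioo c b → ω₂ n = ω₁ n) :
    ∀ t ∈ Ioo c b, wronskian u u' v v' t = 0 := by
  have hsub : Ioo c b ⊆ Ioo a b := Ioo_subset_Ioo_left hc.1.le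
  have hu' := hu.sol.mono hsub
  have hv' := (hv.sol.mono hsub).congr_coupling fun n hn => by rw [hω n hn]
  cases hbcb : bcb with
  | some γ =>
    obtain ⟨hcu, hcu', hbu⟩ := hu.bc_b γ hbcb
    obtain ⟨hcv, hcv', hbv⟩ := hv.bc_b γ hbcb
    refine hu'.wronskian_eq_zero_of_tendsto hv' (Ioo_mem_nhdsLT hc.2) ?_
    rw [← det_eq_zero_of_boundary_condition hbu hbv]
    exact ((hcu.mono Iio_subset_Iic_self).mul (hcv'.mono Iio_subset_Iic_self)).sub
      ((hcu'.mono Iio_subset_Iic_self).mul (hcv.mono Iio_subset_Iic_self))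
  | none =>
    obtain ⟨f, f', hf, hf2⟩ := hlpb hbcb ω₁
    have hμ : volume.restrict (Ioo c b) ≤ volume.restrict (Ioo a b) :=
      Measure.restrict_mono hsub le_rfl
    exact hu'.wronskian_eq_zero_of_not_memLp hv' (hf.mono hsub) (fun t ht => hM t (hsub ht))
      (fun K hK hKs => hdisc K hK (hKs.trans hsub)) (hu.sq.mono_measure hμ)
      (hv.sq.mono_measure hμ) (hf2 c hc)

theorem mul_eq_zero_of_coupling_ne [Countable ι] (hu : EigWit V a b x ω₁ bca bcb E u u')
    (hv : EigWit V a b x ω₂ bca bcb E v v') (hM : ∀ t ∈ Ioo a b, |V t - E| ≤ M)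
    (hx : ∀ n, x n ∈ Ioo a b)
    (hdisc : ∀ K : Set ℝ, IsCompact K → K ⊆ Ioo a b → {n | x n ∈ K}.Finite)
    (hlpa : bca = none → ∀ ω : ι → ℝ, ∃ f f' : ℝ → ℝ,
      DeltaODE V a b x ω E f f' ∧ ∀ c ∈ Ioo a b, ¬ MemLp f 2 (volume.restrict (Ioo a c)))
    (hlpb : bcb = none → ∀ ω : ι → ℝ, ∃ f f' : ℝ → ℝ,
      DeltaODE V a b x ω E f f' ∧ ∀ c ∈ Ioo a b, ¬ MemLp f 2 (volume.restrict (Ioo c b)))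
    {k : ι} (hω : ∀ j, j ≠ k → ω₂ j = ω₁ j) (hne : ω₁ k ≠ ω₂ k) :
    u (x k) * v (x k) = 0 := by
  -- the Wronskian vanishes on both sides of `x k`, and jumps there by `(ω₂ k - ω₁ k) u v`
  have hxk := hx k
  have hω' : ∀ n, x n ≠ x k → ω₂ n = ω₁ n := fun n hn => hω n fun h => hn (congrArg x h)
  have hl := hu.wronskian_eq_zero_left hv hM hdisc hlpa hxk fun n hn => hω' n hn.2.ne
  have hr := hu.wronskian_eq_zero_right hv hM hdisc hlpb hxk fun n hn => hω' n hn.1.ne'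
  obtain ⟨dmu, hdmu, hju⟩ := hu.sol.jump k hxk
  obtain ⟨dmv, hdmv, hjv⟩ := hv.sol.jump k hxk
  have hu0 := (hu.sol.continuousAt hxk).tendsto
  have hv0 := (hv.sol.continuousAt hxk).tendsto
  have hL : u (x k) * dmv - dmu * v (x k) = 0 :=
    tendsto_nhds_unique (((hu0.mono_left nhdsWithin_le_nhds).mul hdmv).sub
      (hdmu.mul (hv0.mono_left nhdsWithin_le_nhds))) (tendsto_nhdsLT_of_eqOn hxk.1 hl)
  have hR : wronskian u u' v v' (x k) = 0 :=
    tendsto_nhds_unique (((hu0.mono_left nhdsWithin_le_nhds).mul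
      (hv.sol.tendsto_deriv_nhdsGT hxk)).sub ((hu.sol.tendsto_deriv_nhdsGT hxk).mul
      (hv0.mono_left nhdsWithin_le_nhds))) (tendsto_nhdsGT_of_eqOn hxk.2 hr)
  have : (ω₂ k - ω₁ k) * (u (x k) * v (x k)) = 0 := by
    unfold wronskian at hR
    linear_combination hR - hL - u (x k) * hjv + v (x k) * hju
  exact (mul_eq_zero.1 this).resolve_left (sub_ne_zero.2 hne.symm)

end EigWit

theorem mem_eigenSetVanishingOn_insert {ι : Type*} [Countable ι] [DecidableEq ι]
    {V : ℝ → ℝ} {a b M E : ℝ} {x : ι → ℝ} {bca bcb : Option ℝ}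
    (hM : ∀ t ∈ Ioo a b, |V t - E| ≤ M) (hx : ∀ n, x n ∈ Ioo a b)
    (hdisc : ∀ K : Set ℝ, IsCompact K → K ⊆ Ioo a b → {n | x n ∈ K}.Finite)
    (hlpa : bca = none → ∀ ω : ι → ℝ, ∃ f f' : ℝ → ℝ,
      DeltaODE V a b x ω E f f' ∧ ∀ c ∈ Ioo a b, ¬ MemLp f 2 (volume.restrict (Ioo a c)))
    (hlpb : bcb = none → ∀ ω : ι → ℝ, ∃ f f' : ℝ → ℝ,
      DeltaODE V a b x ω E f f' ∧ ∀ c ∈ Ioo a b, ¬ MemLp f 2 (volume.restrict (Ioo c b)))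
    {Z : Set ℝ} {ω : ι → ℝ} {k : ι} {s t : ℝ} (hst : s ≠ t)
    (hs : Function.update ω k s ∈ eigenSetVanishingOn V a b x bca bcb E Z)
    (ht : Function.update ω k t ∈ eigenSetVanishingOn V a b x bca bcb E Z) :
    ω ∈ eigenSetVanishingOn V a b x bca bcb E (insert (x k) Z) := by
  obtain ⟨u, u', hu, hZu⟩ := hs
  obtain ⟨v, v', hv, hZv⟩ := ht
  have hupd : ∀ r, ∀ j, j ≠ k → ω j = Function.update ω k r j := fun r j hj =>
    (Function.update_of_ne hj r ω).symm
  rcases mul_eq_zero.1 (hu.mul_eq_zero_of_coupling_ne hv hM hx hdisc hlpa hlpb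
      (fun j hj => by rw [← hupd s j hj, ← hupd t j hj]) (by simpa using hst)) with h0 | h0
  · exact ⟨u, u', hu.congr_coupling h0 (hupd s), forall_mem_insert.2 ⟨h0, hZu⟩⟩
  · exact ⟨v, v', hv.congr_coupling h0 (hupd t), forall_mem_insert.2 ⟨h0, hZv⟩⟩

lemma one_lt_mul_sq_of_le_mul_mul {m M d e : ℝ} (hm : 0 < m) (hM : 0 ≤ M) (he : 0 < e)
    (hed : e < d) (h : m ≤ M * m * e * d) : 1 < M * d ^ 2 := by
  have hMpos : 0 < M := hM.lt_of_ne (by rintro rfl; linarith [zero_mul (m * e * d)])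
  nlinarith [mul_pos (mul_pos hMpos hm) (he.trans hed)]

lemma four_lt_mul_add_sq {M A B : ℝ} (hA : 0 < A) (hB : 0 < B) (hMA : 1 < M * A ^ 2)
    (hMB : 1 < M * B ^ 2) : 4 < M * (A + B) ^ 2 := by
  -- `M A B = √(M A² · M B²) > 1`
  nlinarith [mul_pos hA hB, sq_nonneg (M * A * B - 1)]

theorem lyapunov_inequality {u u' q : ℝ → ℝ} {α β M : ℝ} (hαβ : α < β)
    (hcont : ContinuousOn u (Icc α β)) (hd : ∀ t ∈ Ioo α β, HasDerivAt u (u' t) t)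
    (hd2 : ∀ t ∈ Ioo α β, HasDerivAt u' (q t) t) (hq : ∀ t ∈ Ioo α β, |q t| ≤ M * |u t|)
    (hα : u α = 0) (hβ : u β = 0) (hnt : ∃ t ∈ Ioo α β, u t ≠ 0) :
    4 < M * (β - α) ^ 2 := by
  obtain ⟨ξ, hξ, hmax⟩ := isCompact_Icc.exists_isMaxOn (nonempty_Icc.2 hαβ.le) (hcont.pow 2)
  have hle : ∀ t ∈ Icc α β, |u t| ≤ |u ξ| := fun t ht => sq_le_sq.1 (hmax ht)
  obtain ⟨t₀, ht₀, hu₀⟩ := hnt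
  have hm : 0 < |u ξ| := (abs_pos.2 hu₀).trans_le (hle t₀ (Ioo_subset_Icc_self ht₀))
  have hξ' : ξ ∈ Ioo α β := by
    refine ⟨hξ.1.lt_of_ne ?_, hξ.2.lt_of_ne ?_⟩ <;> rintro rfl <;> simp_all
  have hM : 0 ≤ M := nonneg_of_mul_nonneg_left ((abs_nonneg _).trans (hq t₀ ht₀)) (abs_pos.2 hu₀)
  have hu'ξ : u' ξ = 0 := by
    have := (hmax.isLocalMax (Icc_mem_nhds hξ'.1 hξ'.2)).hasDerivAt_eq_zero ((hd ξ hξ').pow 2)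
    simpa [abs_pos.1 hm] using this
  -- `|u''| ≤ M |u ξ|` on `(α, β)` and `u' ξ = 0`
  have hu' : ∀ s ∈ Ioo α β, |u' s| ≤ M * |u ξ| * |s - ξ| := by
    intro s hs
    have := (convex_Ioo α β).norm_image_sub_le_of_norm_hasDerivWithin_le
      (fun t ht => (hd2 t ht).hasDerivWithinAt)
      (fun t ht => (hq t ht).trans (mul_le_mul_of_nonneg_left (hle t (Ioo_subset_Icc_self ht)) hM))
      hξ' hs
    simpa [hu'ξ] using this
  -- on either side of `ξ`, the mean value theorem gives `|u ξ| = |u' η| d` with `|η - ξ| < d`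
  have hleft : 1 < M * (ξ - α) ^ 2 := by
    obtain ⟨η, hη, hslope⟩ := exists_hasDerivAt_eq_slope u u' hξ'.1
      (hcont.mono (Icc_subset_Icc_right hξ.2)) fun t ht => hd t ⟨ht.1, ht.2.trans hξ'.2⟩
    have hb := hu' η ⟨hη.1, hη.2.trans hξ'.2⟩
    rw [hα, sub_zero, eq_div_iff (sub_pos.2 hξ'.1).ne'] at hslope
    refine one_lt_mul_sq_of_le_mul_mul hm hM (e := ξ - η) (by linarith [hη.2])
      (by linarith [hη.1]) ?_
    calc |u ξ| = |u' η| * (ξ - α) := by rw [← hslope, abs_mul, abs_of_pos (sub_pos.2 hξ'.1)]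
      _ ≤ M * |u ξ| * |η - ξ| * (ξ - α) := mul_le_mul_of_nonneg_right hb (sub_pos.2 hξ'.1).le
      _ = M * |u ξ| * (ξ - η) * (ξ - α) := by rw [abs_of_neg (sub_neg.2 hη.2), neg_sub]
  have hright : 1 < M * (β - ξ) ^ 2 := by
    obtain ⟨η, hη, hslope⟩ := exists_hasDerivAt_eq_slope u u' hξ'.2
      (hcont.mono (Icc_subset_Icc_left hξ.1)) fun t ht => hd t ⟨hξ'.1.trans ht.1, ht.2⟩
    have hb := hu' η ⟨hξ'.1.trans hη.1, hη.2⟩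
    rw [hβ, zero_sub, eq_div_iff (sub_pos.2 hξ'.2).ne'] at hslope
    refine one_lt_mul_sq_of_le_mul_mul hm hM (e := η - ξ) (by linarith [hη.1])
      (by linarith [hη.2]) ?_
    calc |u ξ| = |u' η| * (β - ξ) := by
          rw [← abs_neg, ← hslope, abs_mul, abs_of_pos (sub_pos.2 hξ'.2)]
      _ ≤ M * |u ξ| * |η - ξ| * (β - ξ) := mul_le_mul_of_nonneg_right hb (sub_pos.2 hξ'.2).le
      _ = M * |u ξ| * (η - ξ) * (β - ξ) := by rw [abs_of_pos (sub_pos.2 hη.1)]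
  simpa using four_lt_mul_add_sq (sub_pos.2 hξ'.1) (sub_pos.2 hξ'.2) hleft hright

theorem DeltaODE.eq_zero_of_two_zeros {V : ℝ → ℝ} {lo hi M E : ℝ} {ι : Type*}
    {x cpl : ι → ℝ} {u u' : ℝ → ℝ} (h : DeltaODE V lo hi x cpl E u u')
    (hM : ∀ t ∈ Ioo lo hi, |V t - E| ≤ M)
    (hfin : ∀ K : Set ℝ, IsCompact K → K ⊆ Ioo lo hi → {n | x n ∈ K}.Finite)
    {α β : ℝ} (hα : α ∈ Ioo lo hi) (hβ : β ∈ Ioo lo hi) (hαβ : α < β)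
    (hjf : ∀ t ∈ Ioo α β, ∀ n, t ≠ x n) (hlen : M * (β - α) ^ 2 ≤ 4)
    (h0α : u α = 0) (h0β : u β = 0) :
    ∀ t ∈ Ioo lo hi, u t = 0 := by
  have hsub : Icc α β ⊆ Ioo lo hi := Icc_subset_Ioo hα.1 hβ.2
  by_cases hz : ∀ t ∈ Ioo α β, u t = 0
  · have hm : (α + β) / 2 ∈ Ioo α β := ⟨by linarith, by linarith⟩
    have hm' := hsub (Ioo_subset_Icc_self hm)
    exact h.eq_zero_of_eq_zero_of_deriv_eq_zero hM hfin hm' (hz _ hm)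
      (h.deriv_eq_zero_of_eventually hm' (hjf _ hm) (eventually_of_mem (Ioo_mem_nhds hm.1 hm.2) hz))
  · push Not at hz
    have hsub' : ∀ t ∈ Ioo α β, t ∈ Ioo lo hi := fun t ht => hsub (Ioo_subset_Icc_self ht)
    exact absurd hlen (not_le.2 (lyapunov_inequality hαβ
      (fun t ht => (h.continuousAt (hsub ht)).continuousWithinAt)
      (fun t ht => h.deriv t (hsub' t ht) (hjf t ht)) (fun t ht => h.ode t (hsub' t ht) (hjf t ht))
      (fun t ht => abs_mul_sub_mul_le (hM t (hsub' t ht))) h0α h0β hz))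

lemma exists_adjacent_of_finite {ι : Type*} {x : ι → ℝ} {J : Set ℝ} [J.OrdConnected]
    (hfin : {n | x n ∈ J}.Finite) {n₀ m₀ : ι} (hne : x n₀ ≠ x m₀) (hn₀ : x n₀ ∈ J)
    (hm₀ : x m₀ ∈ J) :
    ∃ n m, x n < x m ∧ x n ∈ J ∧ x m ∈ J ∧ ∀ j, x j ∉ Ioo (x n) (x m) := by
  wlog hlt : x n₀ < x m₀ generalizing n₀ m₀
  · exact this hne.symm hm₀ hn₀ (hne.lt_or_gt.resolve_left hlt)
  -- the interaction point of `J` closest to `x m₀` from the left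
  obtain ⟨n, ⟨hnJ, hnm⟩, hmax⟩ := exists_max_image {n | x n ∈ J ∧ x n < x m₀} x
    (hfin.subset fun n hn => hn.1) ⟨n₀, hn₀, hlt⟩
  refine ⟨n, m₀, hnm, hnJ, hm₀, fun j hj => (hmax j ⟨?_, hj.2⟩).not_gt hj.1⟩
  exact Set.OrdConnected.out ‹_› hnJ hm₀ ⟨hj.1.le, hj.2.le⟩

lemma mul_sq_le_four_of_le_two_div_sqrt {M L : ℝ} (hL : 0 ≤ L) (h : L ≤ 2 / √M) :
    M * L ^ 2 ≤ 4 := by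
  rcases le_or_gt M 0 with hM | hM
  · nlinarith [sq_nonneg L]
  · have hLM : L * √M ≤ 2 := (le_div_iff₀ (Real.sqrt_pos.2 hM)).1 h
    calc M * L ^ 2 = (L * √M) ^ 2 := by rw [mul_pow, Real.sq_sqrt hM.le]; ring
      _ ≤ 2 ^ 2 := pow_le_pow_left₀ (by positivity) hLM 2
      _ = 4 := by norm_num

theorem exists_measure_ne_zero_forall_two_updates_mem {ι : Type*} [DecidableEq ι]
    {ν : Measure ℝ} [SFinite ν] (hν : ∀ r, ν {r} = 0) {P : Measure (ι → ℝ)}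
    {S : Set (ι → ℝ)} (hS : MeasurableSet S) (n : ι)
    (hP : P S = ∫⁻ ω, ν {t | Function.update ω n t ∈ S} ∂P) (hPS : P S ≠ 0) :
    ∃ W, MeasurableSet W ∧ P W ≠ 0 ∧
      ∀ ω ∈ W, ∃ s t, s ≠ t ∧ Function.update ω n s ∈ S ∧ Function.update ω n t ∈ S := by
  have hg : Measurable fun ω => ν {t | Function.update ω n t ∈ S} :=
    measurable_measure_prodMk_left (measurable_update' hS)
  refine ⟨{ω | ν {t | Function.update ω n t ∈ S} ≠ 0}, hg (measurableSet_singleton 0).compl,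
    fun hW => hPS ?_, fun ω hω => ?_⟩
  · rw [hP, lintegral_eq_zero_iff hg]
    exact ae_iff.2 hW
  · have : NullSingletonClass ν := ⟨hν⟩
    obtain ⟨s, hs, t, ht, hst⟩ := not_subsingleton_iff.1 fun h => hω (h.measure_zero ν)
    exact ⟨s, t, hst, hs, ht⟩

theorem lyapunov_criterion_null_general
    {ι : Type} [Countable ι] [DecidableEq ι]
    (V : ℝ → ℝ) (a b : ℝ) (x : ι → ℝ) (bca bcb : Option ℝ) (E : ℝ)
    (hx : ∀ n, x n ∈ Set.Ioo a b) (hinj : Function.Injective x)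
    (hdisc : ∀ K : Set ℝ, IsCompact K → K ⊆ Set.Ioo a b → {n | x n ∈ K}.Finite)
    -- limit point case at an endpoint where no boundary condition is imposed
    (hlpa : bca = none → ∀ (ω : ι → ℝ) (lam : ℝ), ∃ f f' : ℝ → ℝ,
      DeltaODE V a b x ω lam f f' ∧ (∃ t ∈ Set.Ioo a b, f t ≠ 0) ∧
      ∀ c ∈ Set.Ioo a b, ¬ MemLp f 2 (volume.restrict (Set.Ioo a c)))
    (hlpb : bcb = none → ∀ (ω : ι → ℝ) (lam : ℝ), ∃ f f' : ℝ → ℝ,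
      DeltaODE V a b x ω lam f f' ∧ (∃ t ∈ Set.Ioo a b, f t ≠ 0) ∧
      ∀ c ∈ Set.Ioo a b, ¬ MemLp f 2 (volume.restrict (Set.Ioo c b)))
    -- the randomness: `P` is the (completed) product of the atomless probability
    -- measures `μ n`; `hP` expresses the Fubini disintegration of `P` along each
    -- coordinate
    (μ : ι → Measure ℝ) [∀ n, IsProbabilityMeasure (μ n)]
    (hatomless : ∀ (n : ι) (r : ℝ), μ n {r} = 0)
    (P : Measure (ι → ℝ))
    (hP : ∀ (n : ι) (S : Set (ι → ℝ)), MeasurableSet S →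
      P S = ∫⁻ ω, μ n {t : ℝ | Function.update ω n t ∈ S} ∂P)
    (K : ℝ) (hK : ∀ t ∈ Set.Ioo a b, |V t| ≤ K)
    (c d : ℝ) (hJ : Set.Icc c d ⊆ Set.Ioo a b)
    (hlen : d - c ≤ 2 / Real.sqrt (K + |E|))
    (hpts : ∃ n m : ι, n ≠ m ∧ x n ∈ Set.Icc c d ∧ x m ∈ Set.Icc c d) :
    ∀ B : Set (ι → ℝ), NullMeasurableSet B P →
      B ⊆ {ω | ∃ u u' : ℝ → ℝ, EigWit V a b x ω bca bcb E u u'} → P B = 0 := by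
  intro B hB hBA
  have hM : ∀ t ∈ Ioo a b, |V t - E| ≤ K + |E| := fun t ht =>
    (abs_sub _ _).trans (by linarith [hK t ht])
  have step : ∀ (n : ι) (Z : Set ℝ) (S : Set (ι → ℝ)), MeasurableSet S → P S ≠ 0 →
      S ⊆ eigenSetVanishingOn V a b x bca bcb E Z → ∃ W, MeasurableSet W ∧ P W ≠ 0 ∧
        W ⊆ eigenSetVanishingOn V a b x bca bcb E (insert (x n) Z) := by
    intro n Z S hS hPS hSZ
    obtain ⟨W, hW, hPW, hWS⟩ :=
      exists_measure_ne_zero_forall_two_updates_mem (hatomless n) hS n (hP n S hS) hPS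
    refine ⟨W, hW, hPW, fun ω hω => ?_⟩
    obtain ⟨s, t, hst, hs, ht⟩ := hWS ω hω
    refine mem_eigenSetVanishingOn_insert hM hx hdisc ?_ ?_ hst (hSZ hs) (hSZ ht)
    · exact fun h ω => let ⟨f, f', hf, _, hf2⟩ := hlpa h ω E; ⟨f, f', hf, hf2⟩
    · exact fun h ω => let ⟨f, f', hf, _, hf2⟩ := hlpb h ω E; ⟨f, f', hf, hf2⟩
  obtain ⟨n₀, m₀, hnm, hn₀, hm₀⟩ := hpts
  obtain ⟨n, m, hlt, hn, hm, hadj⟩ :=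
    exists_adjacent_of_finite (hdisc _ isCompact_Icc hJ) (hinj.ne hnm) hn₀ hm₀
  by_contra hPB
  obtain ⟨S, hSB, hS, hSae⟩ := hB.exists_measurable_subset_ae_eq
  obtain ⟨W₁, hW₁, hPW₁, hW₁Z⟩ := step m ∅ S hS (by rwa [measure_congr hSae]) fun ω hω =>
    let ⟨u, u', hu⟩ := hBA (hSB hω); ⟨u, u', hu, fun _ h => h.elim⟩
  obtain ⟨W₂, -, hPW₂, hW₂Z⟩ := step n _ W₁ hW₁ hPW₁ hW₁Z
  obtain ⟨u, u', hu, hzero⟩ := hW₂Z (nonempty_of_measure_ne_zero hPW₂).some_mem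
  obtain ⟨t, ht, hut⟩ := hu.nontriv
  refine hut (hu.sol.eq_zero_of_two_zeros hM hdisc (hx n) (hx m) hlt
    (fun t ht j hj => hadj j (hj ▸ ht)) ?_ (hzero _ (mem_insert _ _))
    (hzero _ (mem_insert_of_mem _ (mem_insert _ _))) t ht)
  exact mul_sq_le_four_of_le_two_div_sqrt (sub_nonneg.2 hlt.le)
    ((by linarith [hn.1, hm.2] : x m - x n ≤ d - c).trans hlen)

/-- **Lyapunov / disconjugacy criterion.**
If `|V| ≤ K` on `(a,b)` and some interval `J = [c,d] ⊆ (a,b)` of length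
`|J| ≤ 2/√(K+|E|)` contains at least two interaction points, then `P(B) = 0` for
every measurable subset `B` of `A(E) = {ω : E ∈ σ_p(H_ω)}`. -/
theorem lyapunov_criterion_null
    {ι : Type} [Countable ι] [DecidableEq ι]
    (V : ℝ → ℝ) (a b : ℝ) (x : ι → ℝ) (bca bcb : Option ℝ) (E : ℝ)
    (hab : a < b)
    (hx : ∀ n, x n ∈ Set.Ioo a b) (hinj : Function.Injective x)
    (hdisc : ∀ K : Set ℝ, IsCompact K → K ⊆ Set.Ioo a b → {n | x n ∈ K}.Finite)
    -- limit point case at an endpoint where no boundary condition is imposed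
    (hlpa : bca = none → ∀ (ω : ι → ℝ) (lam : ℝ), ∃ f f' : ℝ → ℝ,
      DeltaODE V a b x ω lam f f' ∧ (∃ t ∈ Set.Ioo a b, f t ≠ 0) ∧
      ∀ c ∈ Set.Ioo a b, ¬ MemLp f 2 (volume.restrict (Set.Ioo a c)))
    (hlpb : bcb = none → ∀ (ω : ι → ℝ) (lam : ℝ), ∃ f f' : ℝ → ℝ,
      DeltaODE V a b x ω lam f f' ∧ (∃ t ∈ Set.Ioo a b, f t ≠ 0) ∧
      ∀ c ∈ Set.Ioo a b, ¬ MemLp f 2 (volume.restrict (Set.Ioo c b)))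
    -- the randomness: `P` is the (completed) product of the atomless probability
    -- measures `μ n`; `hP` expresses the Fubini disintegration of `P` along each
    -- coordinate
    (μ : ι → Measure ℝ) [∀ n, IsProbabilityMeasure (μ n)]
    (hatomless : ∀ (n : ι) (r : ℝ), μ n {r} = 0)
    (P : Measure (ι → ℝ)) [IsProbabilityMeasure P]
    (hP : ∀ (n : ι) (S : Set (ι → ℝ)), MeasurableSet S →
      P S = ∫⁻ ω, μ n {t : ℝ | Function.update ω n t ∈ S} ∂P)
    (K : ℝ) (hK : ∀ t ∈ Set.Ioo a b, |V t| ≤ K)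
    (c d : ℝ) (hcd : c ≤ d) (hJ : Set.Icc c d ⊆ Set.Ioo a b)
    (hlen : d - c ≤ 2 / Real.sqrt (K + |E|))
    (hpts : ∃ n m : ι, n ≠ m ∧ x n ∈ Set.Icc c d ∧ x m ∈ Set.Icc c d) :
    ∀ B : Set (ι → ℝ), NullMeasurableSet B P →
      B ⊆ {ω | ∃ u u' : ℝ → ℝ, EigWit V a b x ω bca bcb E u u'} → P B = 0 :=
  lyapunov_criterion_null_general V a b x bca bcb E hx hinj hdisc hlpa hlpb μ hatomless P hP K hK c
    d hJ hlen hpts
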